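/- arXiv:1906.00255 — 5 statements merged into one kernel-verified Lean document; each statement's English description precedes it below -/
import Mathlib

section
/- Let Y be a random variable with Y ≥ 1 almost surely, and let p ≥ 1. Then (E[(log Y)^{p/2}])^{1/p} ≤ 5^{1/p} (p/(2e))^{1/2} · max(1, √(E[Y])/2). -/
/-!
From `e u ≤ exp u` at `u = t / (a s)` one gets `t ^ a ≤ (a s / e) ^ a exp (t / s)`; with
`t = log y` and Bernoulli's inequality `y ^ (1/s) ≤ 1 + (y - 1) / s` this bounds `(log y) ^ a`
by an affine function of `y`, which can be integrated. Taking `a = p/2` and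
`s = max(1, √E[Y]/2)²`, so that `E[Y] / s ≤ 4`, gives
`E[(log Y)^(p/2)] ≤ 5 (p s / (2e))^(p/2)`, and the `p`-th root of this is the claim.
-/

open MeasureTheory Real

theorem rpow_le_mul_exp_div {a s t : ℝ} (ha : 0 < a) (hs : 0 < s) (ht : 0 ≤ t) :
    t ^ a ≤ (a * s / exp 1) ^ a * exp (t / s) := by
  set u := t / (a * s)
  have ht_eq : t = a * s / exp 1 * (exp 1 * u) := by
    unfold u; field_simp
  calc t ^ a = (a * s / exp 1) ^ a * (exp 1 * u) ^ a := by
        rw [ht_eq, mul_rpow (by positivity) (by positivity)]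
    _ ≤ (a * s / exp 1) ^ a * exp u ^ a := by
        gcongr
        exact exp_one_mul_le_exp
    _ = (a * s / exp 1) ^ a * exp (t / s) := by
        rw [← exp_mul]; congr 2; unfold u; field_simp

theorem log_rpow_le_mul_rpow_inv {a s y : ℝ} (ha : 0 < a) (hs : 0 < s) (hy : 1 ≤ y) :
    log y ^ a ≤ (a * s / exp 1) ^ a * y ^ s⁻¹ := by
  rw [rpow_def_of_pos (by linarith : 0 < y) s⁻¹, ← div_eq_mul_inv]
  exact rpow_le_mul_exp_div ha hs (log_nonneg hy)

theorem log_rpow_le_mul_one_add_div {a s y : ℝ} (ha : 0 < a) (hs : 1 ≤ s) (hy : 1 ≤ y) :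
    log y ^ a ≤ (a * s / exp 1) ^ a * (1 + y / s) := by
  have hs0 : 0 < s := by linarith
  have bernoulli : y ^ s⁻¹ ≤ 1 + s⁻¹ * (y - 1) := by
    simpa using rpow_one_add_le_one_add_mul_self (s := y - 1) (by linarith)
      (inv_nonneg.2 hs0.le) (inv_le_one_of_one_le₀ hs)
  calc log y ^ a ≤ (a * s / exp 1) ^ a * y ^ s⁻¹ := log_rpow_le_mul_rpow_inv ha hs0 hy
    _ ≤ (a * s / exp 1) ^ a * (1 + y / s) := by
        gcongr
        rw [div_eq_inv_mul]
        nlinarith [inv_pos.2 hs0]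

theorem integral_log_rpow_le {Ω : Type*} [MeasurableSpace Ω] {μ : Measure Ω}
    [IsProbabilityMeasure μ] {Y : Ω → ℝ} (hone : ∀ᵐ ω ∂μ, 1 ≤ Y ω)
    (hint : Integrable Y μ) {a s : ℝ} (ha : 0 < a) (hs : 1 ≤ s) :
    ∫ ω, log (Y ω) ^ a ∂μ ≤ (a * s / exp 1) ^ a * (1 + (∫ ω, Y ω ∂μ) / s) := by
  have hbound : Integrable (fun ω ↦ (a * s / exp 1) ^ a * (1 + Y ω / s)) μ :=
    ((integrable_const 1).add (hint.div_const s)).const_mul _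
  calc ∫ ω, log (Y ω) ^ a ∂μ ≤ ∫ ω, (a * s / exp 1) ^ a * (1 + Y ω / s) ∂μ := by
        refine integral_mono_of_nonneg ?_ hbound ?_ <;> filter_upwards [hone] with ω hω
        · exact rpow_nonneg (log_nonneg hω) a
        · exact log_rpow_le_mul_one_add_div ha hs hω
    _ = (a * s / exp 1) ^ a * (1 + (∫ ω, Y ω ∂μ) / s) := by
        rw [integral_const_mul, integral_add (integrable_const 1) (hint.div_const s),
          integral_const, integral_div]
        simp

theorem le_four_mul_max_one_sqrt_div_two_sq {x : ℝ} (hx : 0 ≤ x) :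
    x ≤ 4 * max 1 (√x / 2) ^ 2 := by
  have hsqrt : √x / 2 ≤ max 1 (√x / 2) := le_max_right _ _
  nlinarith [sq_sqrt hx, sqrt_nonneg x]

theorem lp_sqrt_log_le_general {Ω : Type*} [MeasurableSpace Ω] (μ : Measure Ω)
    [IsProbabilityMeasure μ] (Y : Ω → ℝ)
    (hone : ∀ᵐ ω ∂μ, 1 ≤ Y ω) (hint : Integrable Y μ)
    (p : ℝ) (hp : 1 ≤ p) :
    (∫ ω, (Real.log (Y ω)) ^ (p / 2) ∂μ) ^ (1 / p)
      ≤ (5 : ℝ) ^ (1 / p) * (p / (2 * Real.exp 1)) ^ ((1:ℝ) / 2)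
          * max 1 (Real.sqrt (∫ ω, Y ω ∂μ) / 2) := by
  set m := max 1 (√(∫ ω, Y ω ∂μ) / 2)
  have hm : 1 ≤ m := le_max_left _ _
  have hmean : (∫ ω, Y ω ∂μ) ≤ 4 * m ^ 2 := le_four_mul_max_one_sqrt_div_two_sq
    (integral_nonneg_of_ae (hone.mono fun _ h ↦ zero_le_one.trans h))
  have hmoment : ∫ ω, log (Y ω) ^ (p / 2) ∂μ ≤ 5 * (p / 2 * m ^ 2 / exp 1) ^ (p / 2) := by
    refine (integral_log_rpow_le hone hint (by linarith) (one_le_pow₀ (n := 2) hm)).trans ?_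
    rw [mul_comm 5]
    gcongr
    linarith [(div_le_iff₀ (by positivity)).2 hmean]
  have hroot : ((p / 2 * m ^ 2 / exp 1) ^ (p / 2)) ^ (1 / p)
      = (p / (2 * exp 1)) ^ (1 / 2 : ℝ) * m := by
    rw [← rpow_mul (by positivity), show p / 2 * (1 / p) = 1 / 2 by field_simp,
      show p / 2 * m ^ 2 / exp 1 = p / (2 * exp 1) * m ^ 2 by ring,
      mul_rpow (by positivity) (by positivity), ← sqrt_eq_rpow, ← sqrt_eq_rpow,
      sqrt_sq (by linarith)]
  calc (∫ ω, log (Y ω) ^ (p / 2) ∂μ) ^ (1 / p)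
      ≤ (5 * (p / 2 * m ^ 2 / exp 1) ^ (p / 2)) ^ (1 / p) := by
        gcongr
        exact integral_nonneg_of_ae (hone.mono fun _ h ↦ rpow_nonneg (log_nonneg h) _)
    _ = 5 ^ (1 / p) * (p / (2 * exp 1)) ^ (1 / 2 : ℝ) * m := by
        rw [mul_rpow (by norm_num) (by positivity), hroot, mul_assoc]

/-- **`L^p` norm of `√(log Y)`.**
If `Y ≥ 1` almost surely and `p ≥ 1`, then
`(E[(log Y)^(p/2)])^(1/p) ≤ 5^(1/p) (p/(2e))^(1/2) · max(1, √(E[Y])/2)`. -/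
theorem lp_sqrt_log_le {Ω : Type*} [MeasurableSpace Ω] (μ : Measure Ω)
    [IsProbabilityMeasure μ] (Y : Ω → ℝ) (hY : Measurable Y)
    (hone : ∀ᵐ ω ∂μ, 1 ≤ Y ω) (hint : Integrable Y μ)
    (p : ℝ) (hp : 1 ≤ p) :
    (∫ ω, (Real.log (Y ω)) ^ (p / 2) ∂μ) ^ (1 / p)
      ≤ (5 : ℝ) ^ (1 / p) * (p / (2 * Real.exp 1)) ^ ((1:ℝ) / 2)
          * max 1 (Real.sqrt (∫ ω, Y ω ∂μ) / 2) :=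
  lp_sqrt_log_le_general μ Y hone hint p hp
end

section
/- If N̂ ~ Poisson(N) with N ≥ 1, then E[exp(N/(2(N̂+1)))] ≤ 2. -/
/-!
Expand `exp (N / (2 (n + 1)))` as a power series in `j`. Since `(n + j)! ≤ n! j! (n + 1) ^ j`,
the `(n, j)` term of the resulting double series is at most `2⁻ʲ N ^ (n + j) / (n + j)!`.
Regrouping by `m = n + j` (Tonelli, in `ℝ≥0∞`) bounds the whole expectation by
`e^{-N} · e^N · ∑ⱼ 2⁻ʲ = 2`.
-/

open scoped ENNReal Nat

theorem Nat.factorial_add_le_factorial_mul_factorial_mul_pow (n j : ℕ) :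
    (n + j)! ≤ n ! * j ! * (n + 1) ^ j := by
  rw [← Nat.factorial_mul_ascFactorial, mul_assoc]
  exact Nat.mul_le_mul_left _ (Nat.ascFactorial_le_factorial_mul_pow _ _)

theorem ENNReal.tsum_tsum_add_mul_le (f g : ℕ → ℝ≥0∞) :
    ∑' n, ∑' j, f (n + j) * g j ≤ (∑' m, f m) * ∑' j, g j := by
  have hinj : Function.Injective fun p : ℕ × ℕ => (p.1 + p.2, p.2) := by
    rintro ⟨n, j⟩ ⟨n', j'⟩ h
    simp only [Prod.mk.injEq] at h
    ext <;> omega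
  calc ∑' n, ∑' j, f (n + j) * g j = ∑' p : ℕ × ℕ, f (p.1 + p.2) * g p.2 :=
        ENNReal.tsum_prod.symm
    _ ≤ ∑' q : ℕ × ℕ, f q.1 * g q.2 :=
        ENNReal.tsum_comp_le_tsum_of_injective hinj fun q => f q.1 * g q.2
    _ = (∑' m, f m) * ∑' j, g j := by
        rw [ENNReal.tsum_prod', ← ENNReal.tsum_mul_right]
        exact tsum_congr fun m => ENNReal.tsum_mul_left (a := f m) (f := g)

theorem ENNReal.ofReal_exp_eq_tsum {x : ℝ} (hx : 0 ≤ x) :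
    ENNReal.ofReal (Real.exp x) = ∑' j : ℕ, ENNReal.ofReal (x ^ j / j !) := by
  rw [Real.exp_eq_exp_ℝ, NormedSpace.exp_eq_tsum_div,
    ENNReal.ofReal_tsum_of_nonneg (fun j => by positivity) (Real.summable_pow_div_factorial x)]

theorem tsum_le_of_tsum_ofReal_le {ι : Type*} {f : ι → ℝ} {c : ℝ} (hf : ∀ i, 0 ≤ f i)
    (hc : 0 ≤ c) (h : ∑' i, ENNReal.ofReal (f i) ≤ ENNReal.ofReal c) : ∑' i, f i ≤ c := by
  by_cases hs : Summable f
  · rwa [← ENNReal.ofReal_tsum_of_nonneg hf hs, ENNReal.ofReal_le_ofReal_iff hc] at h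
  · rw [tsum_eq_zero_of_not_summable hs]
    exact hc

theorem pow_div_factorial_mul_pow_div_factorial_le {N : ℝ} (hN : 0 ≤ N) (n j : ℕ) :
    N ^ n / n ! * ((N / (2 * ((n : ℝ) + 1))) ^ j / j !) ≤
      N ^ (n + j) / (n + j)! * (1 / 2) ^ j := by
  have hfac : ((n + j)! : ℝ) ≤ n ! * j ! * ((n : ℝ) + 1) ^ j := by
    exact_mod_cast Nat.factorial_add_le_factorial_mul_factorial_mul_pow n j
  calc N ^ n / n ! * ((N / (2 * ((n : ℝ) + 1))) ^ j / j !)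
      = N ^ (n + j) / (n ! * j ! * ((n : ℝ) + 1) ^ j) * (1 / 2) ^ j := by
        rw [div_pow, mul_pow, pow_add]
        field_simp
        rw [mul_assoc, ← mul_pow]
        norm_num
    _ ≤ N ^ (n + j) / (n + j)! * (1 / 2) ^ j := by
        gcongr

theorem ofReal_pow_div_factorial_mul_exp_le {N : ℝ} (hN : 0 ≤ N) (n : ℕ) :
    ENNReal.ofReal (N ^ n / n ! * Real.exp (N / (2 * ((n : ℝ) + 1)))) ≤
      ∑' j : ℕ, ENNReal.ofReal (N ^ (n + j) / (n + j)!) * ENNReal.ofReal ((1 / 2) ^ j) := by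
  rw [ENNReal.ofReal_mul (by positivity), ENNReal.ofReal_exp_eq_tsum (by positivity),
    ← ENNReal.tsum_mul_left]
  refine ENNReal.tsum_le_tsum fun j => ?_
  rw [← ENNReal.ofReal_mul (by positivity), ← ENNReal.ofReal_mul (by positivity)]
  exact ENNReal.ofReal_le_ofReal (pow_div_factorial_mul_pow_div_factorial_le hN n j)

/-- If `N̂ ~ Poisson(N)` with `N ≥ 1`, then `E[exp(N/(2(N̂+1)))] ≤ 2`.
The expectation is written as a sum against the Poisson probability mass
function `P(N̂ = n) = exp(-N) N^n / n!`. -/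
theorem poisson_exp_inverse_moment_le_two (N : ℝ) (hN : 1 ≤ N) :
    ∑' n : ℕ, Real.exp (-N) * N ^ n / (Nat.factorial n : ℝ)
        * Real.exp (N / (2 * ((n : ℝ) + 1))) ≤ 2 := by
  have hN0 : 0 ≤ N := zero_le_one.trans hN
  refine tsum_le_of_tsum_ofReal_le (fun n => by positivity) zero_le_two ?_
  calc ∑' n : ℕ,
        ENNReal.ofReal (Real.exp (-N) * N ^ n / n ! * Real.exp (N / (2 * ((n : ℝ) + 1))))
      = ENNReal.ofReal (Real.exp (-N)) *
          ∑' n : ℕ, ENNReal.ofReal (N ^ n / n ! * Real.exp (N / (2 * ((n : ℝ) + 1)))) := by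
        simp only [mul_div_assoc, mul_assoc, ENNReal.ofReal_mul (Real.exp_pos _).le,
          ENNReal.tsum_mul_left]
    _ ≤ ENNReal.ofReal (Real.exp (-N)) * ∑' n : ℕ, ∑' j : ℕ,
          ENNReal.ofReal (N ^ (n + j) / (n + j)!) * ENNReal.ofReal ((1 / 2) ^ j) := by
        gcongr with n
        exact ofReal_pow_div_factorial_mul_exp_le hN0 n
    _ ≤ ENNReal.ofReal (Real.exp (-N)) * ((∑' m : ℕ, ENNReal.ofReal (N ^ m / m !)) *
          ∑' j : ℕ, ENNReal.ofReal ((1 / 2) ^ j)) := by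
        gcongr
        exact ENNReal.tsum_tsum_add_mul_le _ _
    _ = ENNReal.ofReal 2 := by
        rw [← ENNReal.ofReal_exp_eq_tsum hN0, ← ENNReal.ofReal_tsum_of_nonneg
          (fun j => by positivity) summable_geometric_two, tsum_geometric_two,
          ← ENNReal.ofReal_mul (Real.exp_pos _).le, ← ENNReal.ofReal_mul (Real.exp_pos _).le,
          ← mul_assoc, ← Real.exp_add, neg_add_cancel, Real.exp_zero, one_mul]
end

section
/- Let f_q(x) = qᵀ c(x) for q in the simplex Δ_d, where each component c_i : X → ℝ is γ-strongly convex and L-Lipschitz on a nonempty convex set X ⊆ ℝ^n, and let x(q) be the minimizer of f_q over X. Then for any q, q' ∈ Δ_d, ‖x(q) − x(q')‖₂ ≤ (L/γ) ‖q − q'‖₁. -/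
lemma aux_strong_min {E : Type*} [NormedAddCommGroup E] [NormedSpace ℝ E]
    {X : Set E} {γ : ℝ} {f : E → ℝ} (hf : StrongConvexOn X γ f)
    {x y : E} (hx : x ∈ X) (hy : y ∈ X) (hmin : IsMinOn f X x) :
    f x + γ / 2 * ‖y - x‖ ^ 2 ≤ f y := by
  set C : ℝ := γ / 2 * ‖y - x‖ ^ 2 with hC
  have hb : 0 ≤ f y - f x := sub_nonneg.2 (hmin hy)
  have key : ∀ a : ℝ, 0 < a → a < 1 → (1 - a) * C ≤ f y - f x := by
    intro a ha ha1
    have h1 : (0:ℝ) ≤ 1 - a := by linarith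
    have hcomb := hf.2 hx hy h1 ha.le (by ring)
    have hz : (1 - a) • x + a • y ∈ X := hf.1 hx hy h1 ha.le (by ring)
    have hmz := hmin hz
    simp only [smul_eq_mul] at hcomb hmz
    have hxy : ‖x - y‖ = ‖y - x‖ := norm_sub_rev x y
    rw [hxy] at hcomb
    have : f x ≤ (1 - a) * f x + a * f y - (1 - a) * a * C := by
      calc f x ≤ f ((1 - a) • x + a • y) := hmz
        _ ≤ _ := hcomb
    nlinarith
  by_contra hlt
  push_neg at hlt
  have hCpos : 0 < C := by linarith
  have ha : (0:ℝ) < (C - (f y - f x)) / (2 * C) :=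
    div_pos (by linarith) (by positivity)
  have ha1 : (C - (f y - f x)) / (2 * C) < 1 := by
    rw [div_lt_one (by positivity)]; linarith
  have hk := key _ ha ha1
  have hco : (1 - (C - (f y - f x)) / (2 * C)) * C = (C + (f y - f x)) / 2 := by
    field_simp; ring
  rw [hco] at hk
  linarith

/-- **Continuity of minimizers of simplex-weighted strongly convex costs.**
Let `f_q(x) = qᵀ c(x)` for `q` in the simplex `Δ_d`, where each component
`c_i : X → ℝ` is `γ`-strongly convex and `L`-Lipschitz on a nonempty convex
set `X ⊆ ℝⁿ`, and let `x(q)` minimize `f_q` over `X`.  Then for any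
`q, q' ∈ Δ_d`, `‖x(q) − x(q')‖₂ ≤ (L/γ) ‖q − q'‖₁`. -/
theorem minimizer_lipschitz_in_simplex_weights (n d : ℕ)
    (X : Set (EuclideanSpace ℝ (Fin n))) (hX : Convex ℝ X) (hXne : X.Nonempty)
    (γ L : ℝ) (hγ : 0 < γ) (hL : 0 ≤ L)
    (c : Fin d → EuclideanSpace ℝ (Fin n) → ℝ)
    (hsc : ∀ i, StrongConvexOn X γ (c i))
    (hlip : ∀ i, LipschitzOnWith (Real.toNNReal L) (c i) X)
    (q q' : Fin d → ℝ)
    (hq0 : ∀ i, 0 ≤ q i) (hq1 : ∑ i, q i = 1)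
    (hq'0 : ∀ i, 0 ≤ q' i) (hq'1 : ∑ i, q' i = 1)
    (xq xq' : EuclideanSpace ℝ (Fin n))
    (hxqX : xq ∈ X) (hxq : IsMinOn (fun x => ∑ i, q i * c i x) X xq)
    (hxq'X : xq' ∈ X) (hxq' : IsMinOn (fun x => ∑ i, q' i * c i x) X xq') :
    ‖xq - xq'‖ ≤ L / γ * ∑ i, |q i - q' i| := by
  -- combination is strongly convex
  have hcomb : ∀ (p : Fin d → ℝ), (∀ i, 0 ≤ p i) → (∑ i, p i) = 1 →
      StrongConvexOn X γ (fun x => ∑ i, p i * c i x) := by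
    intro p hp0 hp1
    refine ⟨hX, fun x hx y hy a b ha hb hab => ?_⟩
    simp only [smul_eq_mul]
    have h := fun i => (hsc i).2 hx hy ha hb hab
    simp only [smul_eq_mul] at h
    calc ∑ i, p i * c i (a • x + b • y)
        ≤ ∑ i, p i * (a * c i x + b * c i y - a * b * (γ / 2 * ‖x - y‖ ^ 2)) :=
          Finset.sum_le_sum fun i _ => mul_le_mul_of_nonneg_left (h i) (hp0 i)
      _ = a * ∑ i, p i * c i x + b * ∑ i, p i * c i y
            - (∑ i, p i) * (a * b * (γ / 2 * ‖x - y‖ ^ 2)) := by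
          rw [Finset.mul_sum, Finset.mul_sum, Finset.sum_mul,
            ← Finset.sum_add_distrib, ← Finset.sum_sub_distrib]
          exact Finset.sum_congr rfl fun i _ => by ring
      _ = _ := by rw [hp1]; ring
  have h1 := aux_strong_min (hcomb q hq0 hq1) hxqX hxq'X hxq
  have h2 := aux_strong_min (hcomb q' hq'0 hq'1) hxq'X hxqX hxq'
  have hnn : ‖xq' - xq‖ = ‖xq - xq'‖ := norm_sub_rev _ _
  rw [hnn] at h1
  set t : ℝ := ‖xq - xq'‖ with ht
  have ht0 : 0 ≤ t := norm_nonneg _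
  set S : ℝ := ∑ i, |q i - q' i| with hS
  have hS0 : 0 ≤ S := Finset.sum_nonneg fun i _ => abs_nonneg _
  -- difference bound
  have hdiff : γ * t ^ 2 ≤ ∑ i, (q i - q' i) * (c i xq' - c i xq) := by
    have : γ * t ^ 2 ≤ (∑ i, q i * c i xq' - ∑ i, q i * c i xq)
        + (∑ i, q' i * c i xq - ∑ i, q' i * c i xq') := by nlinarith
    calc γ * t ^ 2 ≤ _ := this
      _ = ∑ i, (q i - q' i) * (c i xq' - c i xq) := by
          rw [← Finset.sum_sub_distrib, ← Finset.sum_sub_distrib, ← Finset.sum_add_distrib]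
          exact Finset.sum_congr rfl fun i _ => by ring
  have hbd : ∑ i, (q i - q' i) * (c i xq' - c i xq) ≤ S * (L * t) := by
    rw [hS, Finset.sum_mul]
    refine Finset.sum_le_sum fun i _ => ?_
    calc (q i - q' i) * (c i xq' - c i xq)
        ≤ |(q i - q' i) * (c i xq' - c i xq)| := le_abs_self _
      _ = |q i - q' i| * |c i xq' - c i xq| := abs_mul _ _
      _ ≤ |q i - q' i| * (L * t) := by
          refine mul_le_mul_of_nonneg_left ?_ (abs_nonneg _)
          have := (hlip i).dist_le_mul xq' hxq'X xq hxqX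
          rw [Real.dist_eq] at this
          calc |c i xq' - c i xq| ≤ (Real.toNNReal L : ℝ) * dist xq' xq := this
            _ = L * t := by
                rw [Real.coe_toNNReal L hL, dist_eq_norm, hnn]
  have hfinal : γ * t ^ 2 ≤ S * (L * t) := le_trans hdiff hbd
  rcases eq_or_lt_of_le ht0 with h0 | h0
  · rw [← h0]; positivity
  · rw [div_mul_eq_mul_div, le_div_iff₀ hγ]
    nlinarith
end

section
/- Let f and g be γ-strongly convex functions on a nonempty convex set X ⊆ ℝ^n with minimizers x_f and x_g respectively. If |f(x) − g(x)| ≤ ε for all x ∈ X, then ‖x_f − x_g‖₂ ≤ √(2ε/γ). -/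
lemma aux_limit {c d : ℝ} (hc : 0 ≤ c) (h : ∀ t : ℝ, 0 < t → t < 1 → (1 - t) * c ≤ d) :
    c ≤ d := by
  by_contra hcd
  push_neg at hcd
  have hc' : 0 < 2 * c + 1 := by linarith
  set t := min (1/2) ((c - d) / (2 * c + 1)) with ht
  have ht1 : 0 < t := by
    apply lt_min (by norm_num)
    exact div_pos (by linarith) hc'
  have ht2 : t < 1 := lt_of_le_of_lt (min_le_left _ _) (by norm_num)
  have ht3 : t ≤ (c - d) / (2 * c + 1) := min_le_right _ _
  have := h t ht1 ht2
  rw [le_div_iff₀ hc'] at ht3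
  nlinarith [mul_nonneg ht1.le hc]

lemma growth {n : ℕ} {X : Set (EuclideanSpace ℝ (Fin n))} {γ : ℝ} (hγ : 0 < γ)
    {f : EuclideanSpace ℝ (Fin n) → ℝ} (hf : StrongConvexOn X γ f)
    {x y : EuclideanSpace ℝ (Fin n)} (hx : x ∈ X) (hy : y ∈ X)
    (hmin : IsMinOn f X x) : γ / 2 * ‖x - y‖ ^ 2 ≤ f y - f x := by
  apply aux_limit (by positivity)
  intro t ht0 ht1
  have hab : (1 - t) + t = 1 := by ring
  have hcvx := hf.2 hx hy (by linarith : (0:ℝ) ≤ 1 - t) ht0.le hab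
  have hmem : (1 - t) • x + t • y ∈ X := hf.1 hx hy (by linarith) ht0.le hab
  have hmin' := hmin hmem
  simp only [smul_eq_mul] at hcvx
  rw [Set.mem_setOf_eq] at hmin'
  have key : t * ((1 - t) * (γ / 2 * ‖x - y‖ ^ 2)) ≤ t * (f y - f x) := by nlinarith [hmin', hcvx]
  exact le_of_mul_le_mul_left key ht0

/-- **Minimizers of uniformly close strongly convex functions are close.**
Let `f` and `g` be `γ`-strongly convex on a nonempty convex `X ⊆ ℝⁿ` with
respective minimizers `x_f` and `x_g`.  If `|f(x) − g(x)| ≤ ε` on `X`, then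
`‖x_f − x_g‖₂ ≤ √(2ε/γ)`. -/
theorem minimizers_close_of_uniformly_close (n : ℕ)
    (X : Set (EuclideanSpace ℝ (Fin n))) (hX : Convex ℝ X) (hXne : X.Nonempty)
    (γ ε : ℝ) (hγ : 0 < γ) (hε : 0 < ε)
    (f g : EuclideanSpace ℝ (Fin n) → ℝ)
    (hf : StrongConvexOn X γ f) (hg : StrongConvexOn X γ g)
    (xf xg : EuclideanSpace ℝ (Fin n))
    (hxfX : xf ∈ X) (hxf : IsMinOn f X xf)
    (hxgX : xg ∈ X) (hxg : IsMinOn g X xg)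
    (hclose : ∀ x ∈ X, |f x - g x| ≤ ε) :
    ‖xf - xg‖ ≤ Real.sqrt (2 * ε / γ) := by
  have h1 := growth hγ hf hxfX hxgX hxf
  have h2 := growth hγ hg hxgX hxfX hxg
  rw [norm_sub_rev] at h2
  have e1 := abs_le.1 (hclose xf hxfX)
  have e2 := abs_le.1 (hclose xg hxgX)
  have hsq : ‖xf - xg‖ ^ 2 ≤ 2 * ε / γ := by
    rw [le_div_iff₀ hγ]
    nlinarith
  calc ‖xf - xg‖ = Real.sqrt (‖xf - xg‖ ^ 2) := by
        rw [Real.sqrt_sq (norm_nonneg _)]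
    _ ≤ Real.sqrt (2 * ε / γ) := Real.sqrt_le_sqrt hsq
end

section
/- Let X ⊆ ℝ^n be nonempty and convex, let c_i : X → ℝ be γ-strongly convex and L-Lipschitz for i = 1,…,d, let p₀, p̂ ∈ Δ_d, N̂ > 0, and for α ∈ [0,∞] define x(α) as the minimizer over X of ((α/(N̂+α)) p₀ + (N̂/(N̂+α)) p̂)ᵀ c(·), with x(∞) the minimizer of p₀ᵀ c(·). Then for any α ≥ 0 with max(α, N̂) > 0, ‖x(α) − x(∞)‖₂ ≤ (2L/γ) · N̂/(N̂ + α). -/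
section aux

variable {E : Type*} [NormedAddCommGroup E] [NormedSpace ℝ E]

/-- Quadratic growth at a minimizer of a strongly convex function. -/
lemma strong_growth_aux {s : Set E} {γ : ℝ} {f : E → ℝ}
    (hf : StrongConvexOn s γ f) {x y : E} (hx : x ∈ s) (hy : y ∈ s)
    (hmin : IsMinOn f s x) :
    γ / 2 * ‖x - y‖ ^ 2 ≤ f y - f x := by
  have key : ∀ t : ℝ, t ∈ Set.Ioo (0:ℝ) 1 →
      (1 - t) * (γ / 2 * ‖x - y‖ ^ 2) ≤ f y - f x := by
    intro t ht
    obtain ⟨ht0, ht1⟩ := ht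
    have ha : (0:ℝ) ≤ 1 - t := by linarith
    have hb : (0:ℝ) ≤ t := le_of_lt ht0
    have hab : (1 - t) + t = 1 := by ring
    have hmem : (1 - t) • x + t • y ∈ s := hf.1 hx hy ha hb hab
    have h1 := hf.2 hx hy ha hb hab
    have h2 : f x ≤ f ((1 - t) • x + t • y) := hmin hmem
    have h3 : f x ≤ (1 - t) * f x + t * f y - (1 - t) * t * (γ / 2 * ‖x - y‖ ^ 2) :=
      h2.trans h1
    have h4 : t * ((1 - t) * (γ / 2 * ‖x - y‖ ^ 2)) ≤ t * (f y - f x) := by nlinarith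
    exact le_of_mul_le_mul_left (by linarith [h4]) ht0
  -- take t → 0⁺
  have hev : ∀ᶠ t in nhdsWithin (0:ℝ) (Set.Ioi 0),
      (1 - t) * (γ / 2 * ‖x - y‖ ^ 2) ≤ f y - f x := by
    filter_upwards [Ioo_mem_nhdsGT_of_mem (by norm_num : (0:ℝ) ∈ Set.Ico (0:ℝ) 1)] with t ht
    exact key t ht
  have htend : Filter.Tendsto (fun t : ℝ => (1 - t) * (γ / 2 * ‖x - y‖ ^ 2))
      (nhdsWithin (0:ℝ) (Set.Ioi 0)) (nhds (γ / 2 * ‖x - y‖ ^ 2)) := by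
    have : Filter.Tendsto (fun t : ℝ => (1 - t) * (γ / 2 * ‖x - y‖ ^ 2))
        (nhds (0:ℝ)) (nhds ((1 - 0) * (γ / 2 * ‖x - y‖ ^ 2))) := by
      exact (Filter.tendsto_id.const_sub 1).mul_const _
    simpa using this.mono_left nhdsWithin_le_nhds
  exact le_of_tendsto htend hev

/-- A nonnegative combination (weights summing to 1) of γ-strongly convex functions is
γ-strongly convex. -/
lemma strong_convex_comb {s : Set E} (hs : Convex ℝ s) {γ : ℝ} {d : ℕ}
    {c : Fin d → E → ℝ} (hsc : ∀ i, StrongConvexOn s γ (c i))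
    (w : Fin d → ℝ) (hw0 : ∀ i, 0 ≤ w i) (hw1 : ∑ i, w i = 1) :
    StrongConvexOn s γ (fun x => ∑ i, w i * c i x) := by
  refine ⟨hs, fun x hx y hy a b ha hb hab => ?_⟩
  have h : ∀ i, w i * c i (a • x + b • y) ≤
      w i * (a * c i x + b * c i y - a * b * (γ / 2 * ‖x - y‖ ^ 2)) := fun i =>
    mul_le_mul_of_nonneg_left ((hsc i).2 hx hy ha hb hab) (hw0 i)
  calc ∑ i, w i * c i (a • x + b • y)
      ≤ ∑ i, w i * (a * c i x + b * c i y - a * b * (γ / 2 * ‖x - y‖ ^ 2)) :=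
        Finset.sum_le_sum fun i _ => h i
    _ = ∑ i, (a * (w i * c i x) + b * (w i * c i y)
          - a * b * (γ / 2 * ‖x - y‖ ^ 2) * w i) :=
        Finset.sum_congr rfl fun i _ => by ring
    _ = a * ∑ i, w i * c i x + b * ∑ i, w i * c i y
        - a * b * (γ / 2 * ‖x - y‖ ^ 2) * ∑ i, w i := by
        simp [Finset.sum_sub_distrib, Finset.sum_add_distrib, Finset.mul_sum]
    _ = a * ∑ i, w i * c i x + b * ∑ i, w i * c i y - a * b * (γ / 2 * ‖x - y‖ ^ 2) := by
        rw [hw1, mul_one]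

end aux


/-- **Continuity of the shrunken solution at `α = ∞`.**
Let `X ⊆ ℝⁿ` be nonempty and convex, let each `c_i` be `γ`-strongly convex and
`L`-Lipschitz on `X`, let `p₀, p̂ ∈ Δ_d` and `N̂ > 0`.  Let `x(α)` minimize
`((α/(N̂+α)) p₀ + (N̂/(N̂+α)) p̂)ᵀ c(·)` over `X` and let `x(∞)` minimize
`p₀ᵀ c(·)` over `X`.  Then for any `α ≥ 0` (so that `max(α, N̂) > 0`),
`‖x(α) − x(∞)‖₂ ≤ (2L/γ) · N̂/(N̂ + α)`. -/
theorem shrunken_solution_continuity_at_infinity (n d : ℕ)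
    (X : Set (EuclideanSpace ℝ (Fin n))) (hX : Convex ℝ X) (hXne : X.Nonempty)
    (γ L : ℝ) (hγ : 0 < γ) (hL : 0 ≤ L)
    (c : Fin d → EuclideanSpace ℝ (Fin n) → ℝ)
    (hsc : ∀ i, StrongConvexOn X γ (c i))
    (hlip : ∀ i, LipschitzOnWith (Real.toNNReal L) (c i) X)
    (p0 phat : Fin d → ℝ)
    (hp00 : ∀ i, 0 ≤ p0 i) (hp01 : ∑ i, p0 i = 1)
    (hphat0 : ∀ i, 0 ≤ phat i) (hphat1 : ∑ i, phat i = 1)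
    (Nh α : ℝ) (hNh : 0 < Nh) (hα : 0 ≤ α)
    (xα xinf : EuclideanSpace ℝ (Fin n))
    (hxαX : xα ∈ X)
    (hxα : IsMinOn
      (fun x => ∑ i, ((α / (Nh + α)) * p0 i + (Nh / (Nh + α)) * phat i) * c i x) X xα)
    (hxinfX : xinf ∈ X)
    (hxinf : IsMinOn (fun x => ∑ i, p0 i * c i x) X xinf) :
    ‖xα - xinf‖ ≤ 2 * L / γ * (Nh / (Nh + α)) := by
  set s : ℝ := Nh / (Nh + α) with hs
  have hden : 0 < Nh + α := by linarith
  have hs0 : 0 ≤ s := div_nonneg hNh.le hden.le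
  set w : Fin d → ℝ := fun i => (α / (Nh + α)) * p0 i + (Nh / (Nh + α)) * phat i with hw
  have hw0 : ∀ i, 0 ≤ w i := fun i => add_nonneg
    (mul_nonneg (div_nonneg hα hden.le) (hp00 i))
    (mul_nonneg (div_nonneg hNh.le hden.le) (hphat0 i))
  have hw1 : ∑ i, w i = 1 := by
    simp only [hw, Finset.sum_add_distrib, ← Finset.mul_sum, hp01, hphat1]
    field_simp
    ring
  -- strong convexity of the two objectives
  have hf : StrongConvexOn X γ (fun x => ∑ i, p0 i * c i x) :=
    strong_convex_comb hX hsc p0 hp00 hp01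
  have hg : StrongConvexOn X γ (fun x => ∑ i, w i * c i x) :=
    strong_convex_comb hX hsc w hw0 hw1
  -- quadratic growth at both minimizers
  have h1 : γ / 2 * ‖xinf - xα‖ ^ 2 ≤
      (∑ i, p0 i * c i xα) - (∑ i, p0 i * c i xinf) :=
    strong_growth_aux hf hxinfX hxαX hxinf
  have h2 : γ / 2 * ‖xα - xinf‖ ^ 2 ≤
      (∑ i, w i * c i xinf) - (∑ i, w i * c i xα) :=
    strong_growth_aux hg hxαX hxinfX hxα
  rw [norm_sub_rev] at h1
  -- combine
  have hcomb : γ * ‖xα - xinf‖ ^ 2 ≤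
      ∑ i, (p0 i - w i) * (c i xα - c i xinf) := by
    have : ∑ i, (p0 i - w i) * (c i xα - c i xinf)
        = ((∑ i, p0 i * c i xα) - (∑ i, p0 i * c i xinf))
          + ((∑ i, w i * c i xinf) - (∑ i, w i * c i xα)) := by
      simp only [Finset.sum_sub_distrib, sub_mul, mul_sub]
      ring
    rw [this]; nlinarith
  -- Lipschitz bound on each term
  have hlipR : ∀ i, |c i xα - c i xinf| ≤ L * ‖xα - xinf‖ := by
    intro i
    have := (hlip i).dist_le_mul xα hxαX xinf hxinfX
    rwa [Real.dist_eq, Real.coe_toNNReal L hL, dist_eq_norm] at this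
  have hdw : ∀ i, p0 i - w i = s * (p0 i - phat i) := by
    intro i; simp only [hw, hs]; field_simp; ring
  have hterm : ∀ i, (p0 i - w i) * (c i xα - c i xinf)
      ≤ s * |p0 i - phat i| * (L * ‖xα - xinf‖) := by
    intro i
    rw [hdw i]
    calc s * (p0 i - phat i) * (c i xα - c i xinf)
        ≤ |s * (p0 i - phat i) * (c i xα - c i xinf)| := le_abs_self _
      _ = s * |p0 i - phat i| * |c i xα - c i xinf| := by
          rw [abs_mul, abs_mul, abs_of_nonneg hs0]
      _ ≤ s * |p0 i - phat i| * (L * ‖xα - xinf‖) := by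
          exact mul_le_mul_of_nonneg_left (hlipR i)
            (mul_nonneg hs0 (abs_nonneg _))
  have habs : ∑ i, |p0 i - phat i| ≤ 2 := by
    calc ∑ i, |p0 i - phat i| ≤ ∑ i, (p0 i + phat i) :=
          Finset.sum_le_sum fun i _ =>
            (abs_sub _ _).trans (by rw [abs_of_nonneg (hp00 i), abs_of_nonneg (hphat0 i)])
      _ = 2 := by rw [Finset.sum_add_distrib, hp01, hphat1]; norm_num
  have hsum : ∑ i, (p0 i - w i) * (c i xα - c i xinf)
      ≤ 2 * L * ‖xα - xinf‖ * s := by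
    calc ∑ i, (p0 i - w i) * (c i xα - c i xinf)
        ≤ ∑ i, s * |p0 i - phat i| * (L * ‖xα - xinf‖) :=
          Finset.sum_le_sum fun i _ => hterm i
      _ = (s * (L * ‖xα - xinf‖)) * ∑ i, |p0 i - phat i| := by
          rw [Finset.mul_sum]; exact Finset.sum_congr rfl fun i _ => by ring
      _ ≤ (s * (L * ‖xα - xinf‖)) * 2 :=
          mul_le_mul_of_nonneg_left habs
            (mul_nonneg hs0 (mul_nonneg hL (norm_nonneg _)))
      _ = 2 * L * ‖xα - xinf‖ * s := by ring
  have hmain : γ * ‖xα - xinf‖ ^ 2 ≤ 2 * L * ‖xα - xinf‖ * s := hcomb.trans hsum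
  rcases eq_or_lt_of_le (norm_nonneg (xα - xinf)) with h0 | h0
  · rw [← h0]
    exact mul_nonneg (div_nonneg (by linarith) hγ.le) hs0
  · rw [div_mul_eq_mul_div, le_div_iff₀ hγ]
    nlinarith
end
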